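/- arXiv:2604.13889 — 3 statements merged into one kernel-verified Lean document; each statement's English description precedes it below -/
import Mathlib

section
/- Let V be a finite-dimensional real inner product space and let U, W be subspaces of V with dim U = dim W. Denote by P_U and P_W the orthogonal projections of V onto U and W respectively, and by ‖·‖ the operator norm. Then ‖(id − P_U) ∘ P_W‖ = ‖P_W ∘ (id − P_U)‖ = ‖(id − P_W) ∘ P_U‖ = ‖P_U ∘ (id − P_W)‖. (This is the norm characterization of the gap θ between two equal-dimensional subspaces used in equation (3.6) of the paper: θ = |||(I−P_J^k)Q_J^h|||_a = |||Q_J^h(I−P_J^k)|||_a = |||Q_{J,⊥}^h P_J^k|||_a = |||P_J^k Q_{J,⊥}^h|||_a.) -/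
/-! By Pythagoras, `‖(1 - P_W) P_U‖ ≤ s` iff `(1 - s²) ‖u‖² ≤ ‖P_W u‖²` for all `u ∈ U`, a lower
bound for the compression `T = P_W|_U : U → W`, whose adjoint is `P_U|_W`. When `dim U = dim W`,
a positive lower bound `c ‖x‖² ≤ ‖T x‖²` makes `T` onto, and writing `y = T x` Cauchy–Schwarz
transfers it to `T†`; so the two gaps `‖(1 - P_W) P_U‖` and `‖(1 - P_U) P_W‖` agree. The other two
equalities are `‖A B‖ = ‖(A B)†‖ = ‖B A‖` for self-adjoint `A`, `B`. -/

open ContinuousLinearMap Module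

section AdjointLowerBound

variable {𝕜 E F : Type*} [RCLike 𝕜] [NormedAddCommGroup E] [InnerProductSpace 𝕜 E]
  [NormedAddCommGroup F] [InnerProductSpace 𝕜 F] [CompleteSpace E] [CompleteSpace F]
  [FiniteDimensional 𝕜 E] [FiniteDimensional 𝕜 F]

theorem ContinuousLinearMap.sq_lowerBound_adjoint_of_finrank_eq
    (hdim : finrank 𝕜 E = finrank 𝕜 F) (T : E →L[𝕜] F) {c : ℝ}
    (hT : ∀ x, c * ‖x‖ ^ 2 ≤ ‖T x‖ ^ 2) (y : F) :
    c * ‖y‖ ^ 2 ≤ ‖adjoint T y‖ ^ 2 := by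
  rcases le_or_gt c 0 with hc | hc
  · exact (mul_nonpos_of_nonpos_of_nonneg hc (sq_nonneg _)).trans (sq_nonneg _)
  have hinj : Function.Injective (T : E →ₗ[𝕜] F) := by
    refine (injective_iff_map_eq_zero _).2 fun x hx => norm_eq_zero.1 ?_
    have := hT x
    simp only [coe_coe] at hx
    rw [hx, norm_zero, zero_pow two_ne_zero] at this
    exact pow_eq_zero_iff two_ne_zero |>.1 <| le_antisymm (by nlinarith) (sq_nonneg _)
  obtain ⟨x, rfl⟩ := (LinearMap.injective_iff_surjective_of_finrank_eq_finrank hdim).1 hinj y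
  have hcs : ‖T x‖ ^ 2 ≤ ‖x‖ * ‖adjoint T (T x)‖ := by
    calc ‖T x‖ ^ 2 = RCLike.re (inner 𝕜 x (adjoint T (T x))) := by
          rw [adjoint_inner_right, inner_self_eq_norm_sq]
      _ ≤ ‖x‖ * ‖adjoint T (T x)‖ := (RCLike.re_le_norm _).trans (norm_inner_le_norm _ _)
  have hsq : c * ‖T x‖ ^ 2 * ‖T x‖ ^ 2 ≤ ‖adjoint T (T x)‖ ^ 2 * ‖T x‖ ^ 2 := by
    calc c * ‖T x‖ ^ 2 * ‖T x‖ ^ 2 ≤ c * (‖x‖ * ‖adjoint T (T x)‖) ^ 2 := by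
          rw [mul_assoc, ← sq]; gcongr
      _ = c * ‖x‖ ^ 2 * ‖adjoint T (T x)‖ ^ 2 := by ring
      _ ≤ ‖T x‖ ^ 2 * ‖adjoint T (T x)‖ ^ 2 := by gcongr; exact hT x
      _ = _ := mul_comm _ _
  rcases eq_or_ne (T x) 0 with h0 | h0
  · simp [h0]
  exact le_of_mul_le_mul_right hsq (by positivity)

end AdjointLowerBound

theorem IsSelfAdjoint.norm_mul_comm {A : Type*} [NonUnitalNormedRing A] [StarRing A]
    [NormedStarGroup A] {a b : A} (ha : IsSelfAdjoint a) (hb : IsSelfAdjoint b) :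
    ‖a * b‖ = ‖b * a‖ := by
  rw [← norm_star, star_mul, ha.star_eq, hb.star_eq]

namespace Submodule

variable {𝕜 V : Type*} [RCLike 𝕜] [NormedAddCommGroup V] [InnerProductSpace 𝕜 V]

theorem norm_sub_starProjection_sq (W : Submodule 𝕜 V) [W.HasOrthogonalProjection] (v : V) :
    ‖v - W.starProjection v‖ ^ 2 = ‖v‖ ^ 2 - ‖W.orthogonalProjectionOnto v‖ ^ 2 := by
  have hP : ‖W.starProjection v‖ = ‖W.orthogonalProjectionOnto v‖ := rfl
  rw [norm_sq_eq_add_norm_sq_starProjection v W, starProjection_orthogonal_val, hP]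
  ring

theorem opNorm_one_sub_starProjection_mul_starProjection_le_iff (U W : Submodule 𝕜 V)
    [U.HasOrthogonalProjection] [W.HasOrthogonalProjection] {s : ℝ} (hs : 0 ≤ s) :
    ‖(1 - W.starProjection) * U.starProjection‖ ≤ s ↔
      ∀ u : U, (1 - s ^ 2) * ‖u‖ ^ 2 ≤ ‖W.orthogonalProjectionOnto u‖ ^ 2 := by
  have happly (v : V) : ((1 - W.starProjection) * U.starProjection) v =
      U.starProjection v - W.starProjection (U.starProjection v) := rfl
  constructor
  · intro h u
    have hu : ‖(u : V) - W.starProjection u‖ ≤ s * ‖u‖ := by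
      calc ‖(u : V) - W.starProjection u‖
          = ‖((1 - W.starProjection) * U.starProjection) u‖ := by
            rw [happly, starProjection_eq_self_iff.2 u.2]
        _ ≤ s * ‖u‖ := le_of_opNorm_le _ h _
    have := pow_le_pow_left₀ (norm_nonneg _) hu 2
    rw [norm_sub_starProjection_sq, mul_pow] at this
    simp only [norm_coe] at this
    linarith
  · intro h
    refine opNorm_le_bound _ hs fun v => ?_
    set u : U := U.orthogonalProjectionOnto v
    have hsq : ‖(u : V) - W.starProjection u‖ ^ 2 ≤ (s * ‖v‖) ^ 2 := by
      calc ‖(u : V) - W.starProjection u‖ ^ 2 ≤ s ^ 2 * ‖u‖ ^ 2 := by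
            rw [norm_sub_starProjection_sq]; simp only [norm_coe]; linarith [h u]
        _ ≤ s ^ 2 * ‖v‖ ^ 2 := by gcongr; exact U.norm_orthogonalProjectionOnto_apply_le v
        _ = (s * ‖v‖) ^ 2 := (mul_pow _ _ _).symm
    rw [happly]
    exact (pow_le_pow_iff_left₀ (norm_nonneg _) (by positivity) two_ne_zero).1 hsq

theorem adjoint_orthogonalProjectionOnto_comp_subtypeL [CompleteSpace V] (U W : Submodule 𝕜 V)
    [CompleteSpace U] [CompleteSpace W] :
    adjoint (W.orthogonalProjectionOnto ∘L U.subtypeL) =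
      U.orthogonalProjectionOnto ∘L W.subtypeL := by
  rw [adjoint_comp, adjoint_orthogonalProjectionOnto, adjoint_subtypeL]

variable [CompleteSpace V] [FiniteDimensional 𝕜 V]

theorem opNorm_one_sub_starProjection_mul_starProjection_le_of_finrank_eq {U W : Submodule 𝕜 V}
    (hdim : finrank 𝕜 U = finrank 𝕜 W) :
    ‖(1 - W.starProjection) * U.starProjection‖ ≤ ‖(1 - U.starProjection) * W.starProjection‖ := by
  have hW := (opNorm_one_sub_starProjection_mul_starProjection_le_iff W U (norm_nonneg _)).1 le_rfl
  rw [opNorm_one_sub_starProjection_mul_starProjection_le_iff U W (norm_nonneg _)]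
  intro u
  have := (U.orthogonalProjectionOnto ∘L W.subtypeL).sq_lowerBound_adjoint_of_finrank_eq
    hdim.symm hW u
  rwa [adjoint_orthogonalProjectionOnto_comp_subtypeL] at this

theorem opNorm_one_sub_starProjection_mul_starProjection_comm {U W : Submodule 𝕜 V}
    (hdim : finrank 𝕜 U = finrank 𝕜 W) :
    ‖(1 - W.starProjection) * U.starProjection‖ = ‖(1 - U.starProjection) * W.starProjection‖ :=
  (opNorm_one_sub_starProjection_mul_starProjection_le_of_finrank_eq hdim).antisymm
    (opNorm_one_sub_starProjection_mul_starProjection_le_of_finrank_eq hdim.symm)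

end Submodule

/-- The norm characterization of the gap between two equal-dimensional subspaces:
for subspaces `U`, `W` of a finite-dimensional real inner product space with
`dim U = dim W`, the operator norms of `(id - P_U) ∘ P_W`, `P_W ∘ (id - P_U)`,
`(id - P_W) ∘ P_U` and `P_U ∘ (id - P_W)` all coincide. -/
theorem gap_norm_symm {V : Type*} [NormedAddCommGroup V] [InnerProductSpace ℝ V]
    [FiniteDimensional ℝ V] (U W : Submodule ℝ V)
    (hdim : Module.finrank ℝ U = Module.finrank ℝ W) :
    ‖(ContinuousLinearMap.id ℝ V - U.subtypeL.comp U.orthogonalProjectionOnto).comp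
        (W.subtypeL.comp W.orthogonalProjectionOnto)‖ =
      ‖(W.subtypeL.comp W.orthogonalProjectionOnto).comp
        (ContinuousLinearMap.id ℝ V - U.subtypeL.comp U.orthogonalProjectionOnto)‖ ∧
    ‖(W.subtypeL.comp W.orthogonalProjectionOnto).comp
        (ContinuousLinearMap.id ℝ V - U.subtypeL.comp U.orthogonalProjectionOnto)‖ =
      ‖(ContinuousLinearMap.id ℝ V - W.subtypeL.comp W.orthogonalProjectionOnto).comp
        (U.subtypeL.comp U.orthogonalProjectionOnto)‖ ∧
    ‖(ContinuousLinearMap.id ℝ V - W.subtypeL.comp W.orthogonalProjectionOnto).comp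
        (U.subtypeL.comp U.orthogonalProjectionOnto)‖ =
      ‖(U.subtypeL.comp U.orthogonalProjectionOnto).comp
        (ContinuousLinearMap.id ℝ V - W.subtypeL.comp W.orthogonalProjectionOnto)‖ := by
  have hP := isSelfAdjoint_starProjection U
  have hQ := isSelfAdjoint_starProjection W
  have h₁ : ‖(1 - U.starProjection) * W.starProjection‖ =
      ‖W.starProjection * (1 - U.starProjection)‖ :=
    ((IsSelfAdjoint.one _).sub hP).norm_mul_comm hQ
  have h₂ : ‖(1 - U.starProjection) * W.starProjection‖ =
      ‖(1 - W.starProjection) * U.starProjection‖ :=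
    (Submodule.opNorm_one_sub_starProjection_mul_starProjection_comm hdim).symm
  have h₃ : ‖(1 - W.starProjection) * U.starProjection‖ =
      ‖U.starProjection * (1 - W.starProjection)‖ :=
    ((IsSelfAdjoint.one _).sub hQ).norm_mul_comm hP
  exact ⟨h₁, h₁.symm.trans h₂, h₃⟩
end

section
/- Let V be a finite-dimensional real inner product space, T a symmetric positive-definite linear endomorphism of V (⟨T v, v⟩ > 0 for all v ≠ 0), and U a T-invariant subspace of V with orthogonal projection P = P_U. Suppose u ∈ V and μ > 0 satisfy ⟨T u, u⟩ = μ‖u‖², and suppose P u ≠ 0. Then 1/μ − ‖P u‖²/⟨T(P u), P u⟩ = (μ‖u − P u‖² − ⟨T(u − P u), u − P u⟩) / (μ · ⟨T(P u), P u⟩). (This is equation (2.8) of the paper, expressing the difference between the reciprocal Rayleigh quotient λ = 1/μ and the generalized Rayleigh quotient Rq(P u) = ‖P u‖²/⟨T(P u), P u⟩ of the projected vector.) -/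
/-!
Since `U` is `T`-invariant and `T` is symmetric, `P u` and `u - P u` are orthogonal both for
`⟪·, ·⟫` and for `⟪T ·, ·⟫`. Hence `‖u‖²` and `⟪T u, u⟫` both split into a `P u` part and a
`u - P u` part, and substituting these into `⟪T u, u⟫ = μ ‖u‖²` gives the identity by clearing
denominators.
-/

open scoped RealInnerProductSpace

namespace LinearMap.IsSymmetric

variable {V : Type*} [NormedAddCommGroup V] [InnerProductSpace ℝ V] {T : V →ₗ[ℝ] V}

theorem inner_map_add_self_of_inner_map_eq_zero (hT : T.IsSymmetric) {x y : V}
    (hxy : ⟪T x, y⟫ = 0) : ⟪T (x + y), x + y⟫ = ⟪T x, x⟫ + ⟪T y, y⟫ := by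
  have hyx : ⟪T y, x⟫ = 0 := by rw [hT, real_inner_comm, hxy]
  simp only [map_add, inner_add_left, inner_add_right, hxy, hyx, add_zero, zero_add]

theorem inner_map_self_eq_add_starProjection (hT : T.IsSymmetric) {U : Submodule ℝ V}
    [U.HasOrthogonalProjection] (hU : ∀ x ∈ U, T x ∈ U) (u : V) :
    ⟪T u, u⟫ = ⟪T (U.starProjection u), U.starProjection u⟫ +
      ⟪T (u - U.starProjection u), u - U.starProjection u⟫ := by
  have horth : ⟪T (U.starProjection u), u - U.starProjection u⟫ = 0 :=
    Submodule.inner_right_of_mem_orthogonal (hU _ (U.starProjection_apply_mem u))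
      (U.sub_starProjection_mem_orthogonal u)
  rw [← hT.inner_map_add_self_of_inner_map_eq_zero horth, add_sub_cancel]

end LinearMap.IsSymmetric

theorem Submodule.norm_sq_eq_add_norm_sq_sub_starProjection {V : Type*} [NormedAddCommGroup V]
    [InnerProductSpace ℝ V] (U : Submodule ℝ V) [U.HasOrthogonalProjection] (u : V) :
    ‖u‖ ^ 2 = ‖U.starProjection u‖ ^ 2 + ‖u - U.starProjection u‖ ^ 2 := by
  have horth : ⟪U.starProjection u, u - U.starProjection u⟫ = 0 :=
    Submodule.inner_right_of_mem_orthogonal (U.starProjection_apply_mem u)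
      (U.sub_starProjection_mem_orthogonal u)
  simpa only [sq, add_sub_cancel] using
    norm_add_sq_eq_norm_sq_add_norm_sq_real horth

/-- Equation (2.8): for a symmetric positive-definite `T` with `T`-invariant subspace `U`
(orthogonal projection `P`), a vector `u` with `⟪T u, u⟫ = μ ‖u‖²` (`μ > 0`) and `P u ≠ 0`,
the difference between the reciprocal Rayleigh quotient `1/μ` and the generalized Rayleigh
quotient `‖P u‖² / ⟪T (P u), P u⟫` equals
`(μ ‖u - P u‖² - ⟪T (u - P u), u - P u⟫) / (μ ⟪T (P u), P u⟫)`. -/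
theorem reciprocal_rayleigh_difference {V : Type*} [NormedAddCommGroup V]
    [InnerProductSpace ℝ V] [FiniteDimensional ℝ V]
    (T : V →ₗ[ℝ] V) (hT : T.IsSymmetric) (hTpos : ∀ v : V, v ≠ 0 → 0 < ⟪T v, v⟫)
    (U : Submodule ℝ V) (hU : ∀ x ∈ U, T x ∈ U)
    (u : V) (μ : ℝ) (hμ : 0 < μ) (hu : ⟪T u, u⟫ = μ * ‖u‖ ^ 2)
    (hPu : U.subtypeL.comp U.orthogonalProjectionOnto u ≠ 0) :
    1 / μ -
      ‖U.subtypeL.comp U.orthogonalProjectionOnto u‖ ^ 2 /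
        ⟪T (U.subtypeL.comp U.orthogonalProjectionOnto u),
          U.subtypeL.comp U.orthogonalProjectionOnto u⟫ =
    (μ * ‖u - U.subtypeL.comp U.orthogonalProjectionOnto u‖ ^ 2 -
        ⟪T (u - U.subtypeL.comp U.orthogonalProjectionOnto u),
          u - U.subtypeL.comp U.orthogonalProjectionOnto u⟫) /
      (μ * ⟪T (U.subtypeL.comp U.orthogonalProjectionOnto u),
          U.subtypeL.comp U.orthogonalProjectionOnto u⟫) := by
  rw [show U.subtypeL.comp U.orthogonalProjectionOnto = U.starProjection from rfl] at hPu ⊢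
  have hform := hT.inner_map_self_eq_add_starProjection hU u
  have hnorm := U.norm_sq_eq_add_norm_sq_sub_starProjection u
  have hpos := hTpos _ hPu
  field_simp
  linear_combination hu - hform + μ * hnorm
end

section
/- Let V be a nonzero finite-dimensional real inner product space, S a symmetric linear endomorphism of V, and c > 0 such that (i) ⟨S w, w⟩ ≥ c‖w‖² for all w ∈ V, and (ii) there exists v ≠ 0 with S v = c • v. Then 1/c is the greatest element of the set { ⟨S w, w⟩ / ‖S w‖² : w ∈ V, w ≠ 0 }, i.e. IsGreatest { x : ℝ | ∃ w ≠ 0, x = ⟨S w, w⟩/‖S w‖² } (1/c). (This is the exact computation of β_max in equation (2.10) of the paper: the maximum of ⟨S w, w⟩/⟨S² w, w⟩ over nonzero w equals the reciprocal of the smallest eigenvalue of S.) -/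
open scoped RealInnerProductSpace

/-- Exact computation of `β_max` in (2.10): if `S` is symmetric and coercive with constant
`c > 0`, and `c` is attained as an eigenvalue of `S`, then `1/c` is the greatest element
of the set of Rayleigh-type quotients `⟪S w, w⟫ / ‖S w‖²` over nonzero `w`. -/
theorem betaMax_eq_inv_smallest_eigenvalue {V : Type*} [NormedAddCommGroup V]
    [InnerProductSpace ℝ V] [FiniteDimensional ℝ V] [Nontrivial V]
    (S : V →ₗ[ℝ] V) (hS : S.IsSymmetric)
    (c : ℝ) (hc : 0 < c) (hcoer : ∀ w : V, c * ‖w‖ ^ 2 ≤ ⟪S w, w⟫)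
    (heig : ∃ v : V, v ≠ 0 ∧ S v = c • v) :
    IsGreatest {x : ℝ | ∃ w : V, w ≠ 0 ∧ x = ⟪S w, w⟫ / ‖S w‖ ^ 2} (1 / c) := by
  constructor
  · obtain ⟨v, hv, hSv⟩ := heig
    refine ⟨v, hv, ?_⟩
    have hnv : (‖v‖ : ℝ) ≠ 0 := norm_ne_zero_iff.mpr hv
    have h1 : ⟪S v, v⟫ = c * ‖v‖ ^ 2 := by
      rw [hSv, real_inner_smul_left, real_inner_self_eq_norm_sq]
    have h2 : ‖S v‖ = c * ‖v‖ := by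
      rw [hSv, norm_smul, Real.norm_eq_abs, abs_of_pos hc]
    rw [h1, h2]
    field_simp
  · rintro x ⟨w, hw, rfl⟩
    have hnw : (0 : ℝ) < ‖w‖ ^ 2 := pow_pos (norm_pos_iff.mpr hw) 2
    have ha : 0 < ⟪S w, w⟫ := lt_of_lt_of_le (mul_pos hc hnw) (hcoer w)
    have hkey : c * ⟪S w, w⟫ ≤ ‖S w‖ ^ 2 := by
      have h0 : (0 : ℝ) ≤ ‖S w - c • w‖ ^ 2 := by positivity
      have hexp : ‖S w - c • w‖ ^ 2 =
          ‖S w‖ ^ 2 - 2 * (c * ⟪S w, w⟫) + c ^ 2 * ‖w‖ ^ 2 := by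
        rw [norm_sub_sq_real, real_inner_smul_right, norm_smul, Real.norm_eq_abs,
          abs_of_pos hc, mul_pow]
      nlinarith [hcoer w, h0]
    have hb : 0 < ‖S w‖ ^ 2 := by
      rcases lt_or_eq_of_le (sq_nonneg ‖S w‖) with h | h
      · exact h
      · exfalso
        have : S w = 0 := by
          have := h.symm
          simpa [pow_eq_zero_iff] using this
        rw [this] at ha
        simp at ha
    rw [div_le_div_iff₀ hb hc]
    nlinarith
end
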